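/- Class BDI block form: let H be a 2n×2n complex matrix that is Hermitian, real (conj(H) = H), satisfies H² = 1, and anticommutes with Σ := fromBlocks(1ₙ, 0, 0, −1ₙ), i.e. Σ·H·Σ = −H. Then there exists an n×n real orthogonal matrix q (conj(q) = q and q·qᵀ = 1ₙ) such that H = fromBlocks(0, q, qᵀ, 0). -/

import Mathlib

/-! Conjugating by `Σ` flips the sign of the off-diagonal blocks only, so `Σ H Σ = -H` kills the
diagonal blocks. A Hermitian real matrix is symmetric, which makes the lower block the transpose
of the upper one, and `H² = 1` then says exactly that this block is orthogonal. -/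

open Matrix

/-- Entrywise complex conjugation of a matrix. -/
def mconj {m n : Type*} (M : Matrix m n ℂ) : Matrix m n ℂ :=
  M.map (starRingEnd ℂ)

namespace Matrix

instance {m n α : Type*} [AddMonoid α] [IsAddTorsionFree α] :
    IsAddTorsionFree (Matrix m n α) :=
  inferInstanceAs (IsAddTorsionFree (m → n → α))

variable {l m α : Type*}

theorem transpose_eq_of_isSymm_fromBlocks_zero_zero [Zero α] {B : Matrix l m α} {C : Matrix m l α}
    (h : (fromBlocks 0 B C 0).IsSymm) : C = Bᵀ := by
  rw [IsSymm, fromBlocks_transpose, fromBlocks_inj] at h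
  exact h.2.2.1.symm

variable [Fintype l] [Fintype m] [DecidableEq l] [DecidableEq m]

theorem fromBlocks_one_neg_one_mul_mul_fromBlocks_one_neg_one [Ring α]
    (A : Matrix l l α) (B : Matrix l m α) (C : Matrix m l α) (D : Matrix m m α) :
    fromBlocks 1 0 0 (-1) * fromBlocks A B C D * fromBlocks 1 0 0 (-1) =
      fromBlocks A (-B) (-C) D := by
  simp [fromBlocks_multiply]

theorem eq_fromBlocks_zero_zero_of_anticommute_fromBlocks_one_neg_one [Ring α]
    [IsAddTorsionFree α] {M : Matrix (l ⊕ m) (l ⊕ m) α}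
    (h : fromBlocks 1 0 0 (-1) * M * fromBlocks 1 0 0 (-1) = -M) :
    M = fromBlocks 0 M.toBlocks₁₂ M.toBlocks₂₁ 0 := by
  rw [← fromBlocks_toBlocks M, fromBlocks_one_neg_one_mul_mul_fromBlocks_one_neg_one,
    fromBlocks_neg, fromBlocks_inj] at h
  obtain ⟨h₁₁, -, -, h₂₂⟩ := h
  rw [self_eq_neg] at h₁₁ h₂₂
  conv_lhs => rw [← fromBlocks_toBlocks M, h₁₁, h₂₂]

theorem fromBlocks_zero_zero_mul_self_eq_one_iff [Semiring α]
    {B : Matrix l m α} {C : Matrix m l α} :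
    fromBlocks 0 B C 0 * fromBlocks 0 B C 0 = 1 ↔ B * C = 1 ∧ C * B = 1 := by
  rw [fromBlocks_multiply, ← fromBlocks_one, fromBlocks_inj]
  simp

end Matrix

theorem mconj_fromBlocks {l m n o : Type*} (A : Matrix n l ℂ) (B : Matrix n m ℂ)
    (C : Matrix o l ℂ) (D : Matrix o m ℂ) :
    mconj (fromBlocks A B C D) = fromBlocks (mconj A) (mconj B) (mconj C) (mconj D) :=
  fromBlocks_map A B C D _

theorem Matrix.IsHermitian.isSymm_of_mconj_eq {n : Type*} {H : Matrix n n ℂ}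
    (hH : H.IsHermitian) (hreal : mconj H = H) : H.IsSymm :=
  calc Hᵀ = (mconj H)ᵀ := by rw [hreal]
    _ = Hᴴ := rfl
    _ = H := hH

/-- Class BDI block form: a flattened Hamiltonian (`Hᴴ = H`, `conj(H) = H`, `H² = 1`)
anticommuting with `Σ = fromBlocks 1 0 0 (−1)` has the form `H = fromBlocks 0 q qᵀ 0`
with `q` real orthogonal. -/
theorem BDI_block_form {n : ℕ}
    (H : Matrix (Fin n ⊕ Fin n) (Fin n ⊕ Fin n) ℂ)
    (hH : Hᴴ = H)
    (hreal : mconj H = H)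
    (hflat : H * H = 1)
    (hchi : (fromBlocks (1 : Matrix (Fin n) (Fin n) ℂ) 0 0 (-1)) * H *
        (fromBlocks (1 : Matrix (Fin n) (Fin n) ℂ) 0 0 (-1)) = -H) :
    ∃ q : Matrix (Fin n) (Fin n) ℂ,
      mconj q = q ∧ q * qᵀ = 1 ∧ qᵀ * q = 1 ∧ H = fromBlocks 0 q qᵀ 0 := by
  have hsymm : H.IsSymm := IsHermitian.isSymm_of_mconj_eq hH hreal
  have hblocks := eq_fromBlocks_zero_zero_of_anticommute_fromBlocks_one_neg_one hchi
  set q := H.toBlocks₁₂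
  rw [hblocks] at hreal hsymm hflat
  have hq : mconj q = q := by
    rw [mconj_fromBlocks, fromBlocks_inj] at hreal
    exact hreal.2.1
  rw [transpose_eq_of_isSymm_fromBlocks_zero_zero hsymm] at hflat hblocks
  obtain ⟨hqqT, hqTq⟩ := fromBlocks_zero_zero_mul_self_eq_one_iff.1 hflat
  exact ⟨q, hq, hqqT, hqTq, hblocks⟩
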